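/- arXiv:2411.15954 — 2 statements merged into one kernel-verified Lean document; each statement's English description precedes it below -/
import Mathlib

section
/- For natural numbers n ≤ L and any m ∈ {0,...,L}, the indicator 1{m = n} equals the alternating sum over ℓ from n to L of (-1)^{ℓ-n} · choose (L) (ℓ) · choose (ℓ) (n) · (choose m ℓ / choose L ℓ) · 1{m ≥ ℓ}. (Pointwise monomial decomposition of the Bernstein constraint in terms of reduced PMM constraints.) -/
/-! Since `choose m ℓ = 0` for `ℓ > m`, the indicator is redundant and `choose L ℓ` cancels, leaving
`∑ ℓ (-1)^(ℓ-n) choose ℓ n * choose m ℓ`. The identity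
`choose m ℓ * choose ℓ n = choose m n * choose (m-n) (ℓ-n)` turns this into
`choose m n * ∑ j (-1)^j choose (m-n) j = choose m n * 1{m = n}`: binomial inversion. -/

open Finset

theorem Int.alternating_sum_range_choose_of_le {k K : ℕ} (hk : k ≤ K) :
    ∑ j ∈ Finset.range (K + 1), ((-1) ^ j * k.choose j : ℤ) = if k = 0 then 1 else 0 := by
  rw [← Int.alternating_sum_range_choose]
  refine (sum_subset (range_subset_range.2 (by omega)) fun j _ hj => ?_).symm
  rw [Nat.choose_eq_zero_of_lt (by simpa using hj)]
  simp

theorem Int.sum_Icc_alternating_choose_mul_choose {n m M : ℕ} (hm : m ≤ M) :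
    ∑ ℓ ∈ Icc n M, ((-1) ^ (ℓ - n) * ℓ.choose n * m.choose ℓ : ℤ) =
      if m = n then 1 else 0 := by
  rcases lt_or_ge m n with hmn | hnm
  · rw [if_neg hmn.ne]
    refine sum_eq_zero fun ℓ hℓ => ?_
    rw [Nat.choose_eq_zero_of_lt (hmn.trans_le (mem_Icc.1 hℓ).1)]
    simp
  calc ∑ ℓ ∈ Icc n M, ((-1) ^ (ℓ - n) * ℓ.choose n * m.choose ℓ : ℤ)
      = ∑ ℓ ∈ Icc n M, (m.choose n : ℤ) * ((-1) ^ (ℓ - n) * (m - n).choose (ℓ - n)) := by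
        refine sum_congr rfl fun ℓ hℓ => ?_
        have h := congrArg (Nat.cast : ℕ → ℤ) (Nat.choose_mul (n := m) (mem_Icc.1 hℓ).1)
        push_cast at h
        linear_combination (-1 : ℤ) ^ (ℓ - n) * h
    _ = m.choose n * ∑ j ∈ Finset.range (M - n + 1), ((-1) ^ j * (m - n).choose j : ℤ) := by
        rw [← mul_sum, ← Ico_add_one_right_eq_Icc, sum_Ico_eq_sum_range,
          Nat.sub_add_comm (hnm.trans hm)]
        simp only [Nat.add_sub_cancel_left]
    _ = if m = n then 1 else 0 := by
        rw [Int.alternating_sum_range_choose_of_le (Nat.sub_le_sub_right hm n)]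
        simp only [show m - n = 0 ↔ m = n by omega]
        split_ifs with h <;> simp [h]

theorem bernstein_monomial_decomposition_general (L n m : ℕ) (hm : m ≤ L) :
    (if m = n then (1 : ℚ) else 0) =
      ∑ ℓ ∈ Finset.Icc n L,
        (-1 : ℚ) ^ (ℓ - n) * (L.choose ℓ) * (ℓ.choose n) *
          ((m.choose ℓ : ℚ) / (L.choose ℓ)) * (if ℓ ≤ m then 1 else 0) := by
  have hterm : ∀ ℓ ∈ Icc n L,
      (-1 : ℚ) ^ (ℓ - n) * (L.choose ℓ) * (ℓ.choose n) *
          ((m.choose ℓ : ℚ) / (L.choose ℓ)) * (if ℓ ≤ m then 1 else 0) =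
        (((-1) ^ (ℓ - n) * ℓ.choose n * m.choose ℓ : ℤ) : ℚ) := by
    intro ℓ hℓ
    have hL : (L.choose ℓ : ℚ) ≠ 0 := by exact_mod_cast (Nat.choose_pos (mem_Icc.1 hℓ).2).ne'
    split_ifs with h
    · push_cast
      field_simp
    · simp [Nat.choose_eq_zero_of_lt (not_le.1 h)]
  rw [sum_congr rfl hterm]
  exact_mod_cast (Int.sum_Icc_alternating_choose_mul_choose hm).symm

theorem bernstein_monomial_decomposition (L n m : ℕ) (hn : n ≤ L) (hm : m ≤ L) :
    (if m = n then (1 : ℚ) else 0) =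
      ∑ ℓ ∈ Finset.Icc n L,
        (-1 : ℚ) ^ (ℓ - n) * (L.choose ℓ) * (ℓ.choose n) *
          ((m.choose ℓ : ℚ) / (L.choose ℓ)) * (if ℓ ≤ m then 1 else 0) :=
  bernstein_monomial_decomposition_general L n m hm
end

section
/- Let L ∈ ℕ, n ≤ L, and η : ℤ → {0,1}. Then ∑_{i=0}^{L-n} ∑_{P ⊆ {0,...,n+i-1}, |P| = i} (∏_{a ∈ {0,...,n+i}} η^P(a)) = 1{∑_{a=0}^{L} η(a) ≥ n+1}. (Telescoping identification of the gradient function h_{n,L}: the sum of flipped monomials equals the indicator that the box {0,...,L} contains at least n+1 particles.) -/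
open Finset

lemma prod_flip_eq (m : ℕ) (P : Finset ℕ) (η : ℕ → ℕ) (hη : ∀ a, η a ≤ 1) :
    (∏ a ∈ Finset.range m, (if a ∈ P then 1 - η a else η a))
      = if (∀ a ∈ Finset.range m, (a ∈ P ↔ η a = 0)) then 1 else 0 := by
  split_ifs with h
  · apply Finset.prod_eq_one
    intro a ha
    rcases (h a ha) with ⟨h1, h2⟩
    by_cases hp : a ∈ P
    · simp [hp, h1 hp]
    · have : η a ≠ 0 := fun h0 => hp (h2 h0)
      have := hη a
      simp [hp]; omega
  · push_neg at h
    obtain ⟨a, ha, hiff⟩ := h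
    apply Finset.prod_eq_zero ha
    by_cases hp : a ∈ P
    · have : η a ≠ 0 := by tauto
      have := hη a
      simp [hp]; omega
    · have : η a = 0 := by tauto
      simp [hp, this]

lemma zero_count (m : ℕ) (η : ℕ → ℕ) (hη : ∀ a, η a ≤ 1) :
    ((Finset.range m).filter (fun a => η a = 0)).card + ∑ a ∈ Finset.range m, η a = m := by
  rw [Finset.card_filter]
  rw [← Finset.sum_add_distrib]
  have : ∀ a ∈ Finset.range m, (if η a = 0 then 1 else 0) + η a = 1 := by
    intro a _
    have := hη a
    split_ifs <;> omega
  rw [Finset.sum_congr rfl this]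
  simp

lemma inner_sum_eq (n i : ℕ) (η : ℕ → ℕ) (hη : ∀ a, η a ≤ 1) :
    (∑ P ∈ (Finset.range (n + i)).powersetCard i,
        ∏ a ∈ Finset.range (n + i + 1), (if a ∈ P then 1 - η a else η a))
      = η (n + i) * (if (∑ a ∈ Finset.range (n + i), η a) = n then 1 else 0) := by
  set m := n + i with hm
  have hsum : ∀ P ∈ (Finset.range m).powersetCard i,
      (∏ a ∈ Finset.range (m + 1), (if a ∈ P then 1 - η a else η a))
        = (if P = (Finset.range m).filter (fun a => η a = 0) then 1 else 0) * η m := by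
    intro P hP
    rw [Finset.mem_powersetCard] at hP
    have hmP : m ∉ P := fun h => by
      have := hP.1 h; simp at this
    rw [Finset.prod_range_succ, if_neg hmP, prod_flip_eq m P η hη]
    congr 1
    apply if_congr _ rfl rfl
    constructor
    · intro h
      ext a
      simp only [Finset.mem_filter, Finset.mem_range]
      constructor
      · intro haP
        have ham : a ∈ Finset.range m := hP.1 haP
        simp at ham
        exact ⟨ham, (h a (by simp [ham])).1 haP⟩
      · intro ⟨ham, h0⟩
        exact (h a (by simp [ham])).2 h0
    · intro h a ha
      subst h
      simp only [Finset.mem_filter] at *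
      constructor
      · intro ⟨_, h0⟩; exact h0
      · intro h0; exact ⟨ha, h0⟩
  rw [Finset.sum_congr rfl hsum]
  rw [← Finset.sum_mul]
  rw [Finset.sum_ite_eq' _ _ (fun _ => (1 : ℕ))]
  have hcard := zero_count m η hη
  have hsle : (∑ a ∈ Finset.range m, η a) ≤ m := by omega
  have hmemiff : ((Finset.range m).filter (fun a => η a = 0) ∈ (Finset.range m).powersetCard i)
      ↔ ((∑ a ∈ Finset.range m, η a) = n) := by
    rw [Finset.mem_powersetCard]
    constructor
    · rintro ⟨-, h⟩; omega
    · intro h; exact ⟨Finset.filter_subset _ _, by omega⟩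
  by_cases hc : (∑ a ∈ Finset.range m, η a) = n
  · rw [if_pos (hmemiff.mpr hc), if_pos hc, one_mul, mul_one]
  · rw [if_neg (fun h => hc (hmemiff.mp h)), if_neg hc, mul_zero, zero_mul]

lemma sum_range_le (m : ℕ) (η : ℕ → ℕ) (hη : ∀ a, η a ≤ 1) :
    (∑ a ∈ Finset.range m, η a) ≤ m := by
  calc (∑ a ∈ Finset.range m, η a) ≤ ∑ a ∈ Finset.range m, 1 :=
        Finset.sum_le_sum (fun a _ => hη a)
    _ = m := by simp

lemma telescope (n d : ℕ) (η : ℕ → ℕ) (hη : ∀ a, η a ≤ 1) :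
    (∑ i ∈ Finset.range (d + 1),
        η (n + i) * (if (∑ a ∈ Finset.range (n + i), η a) = n then 1 else 0))
      = if n + 1 ≤ ∑ a ∈ Finset.range (n + d + 1), η a then 1 else 0 := by
  induction d with
  | zero =>
      rw [Finset.sum_range_one, Finset.sum_range_succ]
      have h1 := sum_range_le n η hη
      have h2 := hη n
      simp only [Nat.add_zero]
      split_ifs <;> omega
  | succ d ih =>
      rw [Finset.sum_range_succ, ih]
      have e1 : n + (d + 1) = n + d + 1 := by omega
      rw [e1]
      have key : (∑ a ∈ Finset.range (n + d + 1 + 1), η a)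
          = (∑ a ∈ Finset.range (n + d + 1), η a) + η (n + d + 1) :=
        Finset.sum_range_succ η (n + d + 1)
      have h2 := hη (n + d + 1)
      split_ifs <;> omega

theorem gradient_function_identification (L n : ℕ) (hn : n ≤ L)
    (η : ℕ → ℕ) (hη : ∀ a, η a ≤ 1) :
    (∑ i ∈ Finset.range (L - n + 1),
        ∑ P ∈ (Finset.range (n + i)).powersetCard i,
          ∏ a ∈ Finset.range (n + i + 1), (if a ∈ P then 1 - η a else η a)) =
      (if n + 1 ≤ ∑ a ∈ Finset.range (L + 1), η a then 1 else 0) := by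
  obtain ⟨d, rfl⟩ : ∃ d, L = n + d := ⟨L - n, by omega⟩
  have hd : n + d - n = d := by omega
  rw [hd]
  rw [Finset.sum_congr rfl (fun i _ => inner_sum_eq n i η hη)]
  exact telescope n d η hη
end
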